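/- Let G be a finitely generated pro-p group and let L be a ℤ_p-lattice with a continuous ℤ_p-linear right G-action. Suppose there is a chain of G-invariant ℤ_p-submodules L = M_1 ⊇ M_2 ⊇ … ⊇ M_{c+1} = {0} such that G acts trivially on each section M_s/M_{s+1} (i.e. m·g − m ∈ M_{s+1} for all m ∈ M_s, g ∈ G, 1 ≤ s ≤ c). Then for every i ∈ ℕ one has p^i L ⊆ λ_i(L) ⊆ p^{i−c} L, where negative powers of p are interpreted inside ℚ_p ⊗_{ℤ_p} L; in particular the lower p-series λ_i(L), i ∈ ℕ, and the series p^i L, i ∈ ℕ, are c-equivalent filtration series of L. -/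

import Mathlib

open Filter Topology
open scoped TensorProduct

/-- A profinite group that is pro-`p`. -/
def IsProPGroup (p : ℕ) (G : Type*) [Group G] [TopologicalSpace G] : Prop :=
  CompactSpace G ∧ T2Space G ∧ TotallyDisconnectedSpace G ∧
    ∀ N : Subgroup G, N.Normal → IsOpen (N : Set G) → ∃ k : ℕ, N.index = p ^ k

/-- Topologically finitely generated. -/
def IsTopFG (G : Type*) [Group G] [TopologicalSpace G] [IsTopologicalGroup G] : Prop :=
  ∃ s : Finset G, (Subgroup.closure (s : Set G)).topologicalClosure = ⊤

variable (p : ℕ) [Fact p.Prime]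

/-- The sublattice `p^k L` of a `ℤ_p`-lattice `L`. -/
noncomputable def pPowLat (L : Type*) [AddCommGroup L] [Module ℤ_[p] L] (k : ℕ) :
    Submodule ℤ_[p] L :=
  LinearMap.range (((p : ℤ_[p]) ^ k) • (LinearMap.id : L →ₗ[ℤ_[p]] L))

/-- `ℓ_L(M) = min { k : p^k L ⊆ M }`. -/
noncomputable def ellLat (L : Type*) [AddCommGroup L] [Module ℤ_[p] L]
    (M : Submodule ℤ_[p] L) : ℕ :=
  sInf { k : ℕ | pPowLat p L k ≤ M }

/-- `u_L(M) = max { k : M ⊆ p^k L }`. -/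
noncomputable def uLat (L : Type*) [AddCommGroup L] [Module ℤ_[p] L]
    (M : Submodule ℤ_[p] L) : ℕ :=
  sSup { k : ℕ | M ≤ pPowLat p L k }

/-- The lower `p`-series `λ_i(L) = L·𝔞_G^i` of a `ℤ_p G`-module `L`, where
`𝔞_G = Σ_g (g−1)ℤ_pG + pℤ_pG`; recursively `λ_0(L) = L` and
`λ_{i+1}(L) = p·λ_i(L) + span{ m·g − m : m ∈ λ_i(L), g ∈ G }`. -/
noncomputable def lambdaSeries {G : Type*} [Group G] (L : Type*) [AddCommGroup L]
    [Module ℤ_[p] L] (ρ : G →* (L ≃ₗ[ℤ_[p]] L)) : ℕ → Submodule ℤ_[p] L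
  | 0 => ⊤
  | i + 1 =>
      Submodule.map (((p : ℤ_[p])) • (LinearMap.id : L →ₗ[ℤ_[p]] L))
          (lambdaSeries L ρ i) ⊔
        Submodule.span ℤ_[p] { x : L | ∃ m ∈ lambdaSeries L ρ i, ∃ g : G, ρ g m - m = x }

/-!
The upper bound compares `λ_i(L)` with `Σ_{s=1}^{c+1} p^{i+1-s} M_s`. This submodule contains
`λ_0(L) = L = M_1`, and it is carried into its successor by multiplication by `p` and by every
`g - 1`, since `g - 1` maps `M_s` into `M_{s+1}` and kills `M_{c+1} = 0`; hence it contains every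
`λ_i(L)`. Multiplying by `p^c` pushes each summand into `p^i L`. Conversely `p^i L ⊆ λ_i(L)`
because `p ∈ 𝔞_G`.
-/

namespace Submodule

variable {R E : Type*} [CommRing R] [AddCommGroup E] [Module R E]

theorem map_smul_id_eq_span_singleton_smul (r : R) (N : Submodule R E) :
    N.map (r • LinearMap.id) = Ideal.span {r} • N := by
  rw [ideal_span_singleton_smul]
  rfl

theorem range_pow_smul_id_eq (r : R) (k : ℕ) :
    LinearMap.range ((r ^ k) • LinearMap.id : E →ₗ[R] E) = Ideal.span {r} ^ k • ⊤ := by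
  rw [LinearMap.range_eq_map, map_smul_id_eq_span_singleton_smul, Ideal.span_singleton_pow]

/-- `Σ_{s=1}^{c+1} I^{i+1-s} F_s`, where for `s > i` the truncated exponent makes the term `F s`. -/
def weightedSup (I : Ideal R) (F : ℕ → Submodule R E) (c i : ℕ) : Submodule R E :=
  ⨆ s ∈ Finset.Icc 1 (c + 1), I ^ (i + 1 - s) • F s

variable (I : Ideal R) (F : ℕ → Submodule R E) (c : ℕ)

theorem le_weightedSup {i s : ℕ} (hs1 : 1 ≤ s) (hs : s ≤ c + 1) :
    I ^ (i + 1 - s) • F s ≤ weightedSup I F c i :=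
  le_iSup₂_of_le (f := fun s _ => I ^ (i + 1 - s) • F s) s (Finset.mem_Icc.2 ⟨hs1, hs⟩) le_rfl

theorem top_le_weightedSup_zero (h : F 1 = ⊤) : ⊤ ≤ weightedSup I F c 0 := by
  have := le_weightedSup I F c (i := 0) le_rfl (Nat.le_add_left 1 c)
  rwa [zero_add, Nat.sub_self, pow_zero, Ideal.one_eq_top, top_smul, h] at this

theorem smul_weightedSup_le (i : ℕ) : I • weightedSup I F c i ≤ weightedSup I F c (i + 1) := by
  simp only [weightedSup, smul_iSup]
  refine iSup₂_le fun s hs => ?_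
  obtain ⟨hs1, hs⟩ := Finset.mem_Icc.1 hs
  calc I • I ^ (i + 1 - s) • F s = I ^ (1 + (i + 1 - s)) • F s := by
        rw [← Submodule.mul_smul, pow_add, pow_one]
    _ ≤ I ^ (i + 1 + 1 - s) • F s := smul_mono_left (Ideal.pow_le_pow_right (by omega))
    _ ≤ weightedSup I F c (i + 1) := le_weightedSup I F c hs1 hs

theorem map_weightedSup_le (f : E →ₗ[R] E) (hf : ∀ s, 1 ≤ s → s ≤ c → (F s).map f ≤ F (s + 1))
    (hbot : F (c + 1) = ⊥) (i : ℕ) :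
    (weightedSup I F c i).map f ≤ weightedSup I F c (i + 1) := by
  simp only [weightedSup, map_iSup, map_smul'']
  refine iSup₂_le fun s hs => ?_
  obtain ⟨hs1, hs⟩ := Finset.mem_Icc.1 hs
  rcases hs.lt_or_eq with hs | rfl
  · calc I ^ (i + 1 - s) • (F s).map f ≤ I ^ (i + 1 + 1 - (s + 1)) • F (s + 1) := by
          rw [show i + 1 + 1 - (s + 1) = i + 1 - s by omega]
          exact smul_mono_right _ (hf s hs1 (by omega))
      _ ≤ weightedSup I F c (i + 1) := le_weightedSup I F c (by omega) (by omega)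
  · rw [hbot, map_bot, smul_bot]
    exact bot_le

theorem pow_smul_weightedSup_le (i : ℕ) : I ^ c • weightedSup I F c i ≤ I ^ i • ⊤ := by
  simp only [weightedSup, smul_iSup]
  refine iSup₂_le fun s hs => ?_
  obtain ⟨-, hs⟩ := Finset.mem_Icc.1 hs
  calc I ^ c • I ^ (i + 1 - s) • F s = I ^ (c + (i + 1 - s)) • F s := by
        rw [← Submodule.mul_smul, pow_add]
    _ ≤ I ^ i • ⊤ := smul_mono (Ideal.pow_le_pow_right (by omega)) le_top

end Submodule

theorem TensorProduct.one_tmul_eq_zpow_smul_of_pow_smul_eq {R K M : Type*} [CommRing R] [Field K]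
    [Algebra R K] [AddCommGroup M] [Module R M] {r : R} (hr : algebraMap R K r ≠ 0) {x y : M}
    {a b : ℕ} (h : r ^ a • y = r ^ b • x) :
    (1 : K) ⊗ₜ[R] x = algebraMap R K r ^ ((a : ℤ) - b) • (1 : K) ⊗ₜ[R] y := by
  have h' : algebraMap R K r ^ a • (1 : K) ⊗ₜ[R] y = algebraMap R K r ^ b • (1 : K) ⊗ₜ[R] x := by
    simpa only [← map_pow, algebraMap_smul, ← TensorProduct.tmul_smul] using
      congrArg ((1 : K) ⊗ₜ[R] ·) h
  rw [zpow_sub₀ hr, zpow_natCast, zpow_natCast, div_eq_mul_inv, mul_comm, mul_smul, h',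
    inv_smul_smul₀ (pow_ne_zero _ hr)]

section LowerPSeries

variable {L : Type*} [AddCommGroup L] [Module ℤ_[p] L]

theorem pPowLat_eq_span_pow_smul_top (k : ℕ) :
    pPowLat p L k = Ideal.span {(p : ℤ_[p])} ^ k • ⊤ :=
  Submodule.range_pow_smul_id_eq _ k

variable {G : Type*} [Group G] (ρ : G →* (L ≃ₗ[ℤ_[p]] L))

theorem lambdaSeries_succ (i : ℕ) :
    lambdaSeries p L ρ (i + 1) = Ideal.span {(p : ℤ_[p])} • lambdaSeries p L ρ i ⊔
      Submodule.span ℤ_[p] { x : L | ∃ m ∈ lambdaSeries p L ρ i, ∃ g : G, ρ g m - m = x } := by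
  rw [lambdaSeries, Submodule.map_smul_id_eq_span_singleton_smul]

theorem pPowLat_le_lambdaSeries (i : ℕ) : pPowLat p L i ≤ lambdaSeries p L ρ i := by
  induction i with
  | zero => exact le_top
  | succ i ih =>
    rw [pPowLat_eq_span_pow_smul_top, pow_succ', Submodule.mul_smul,
      ← pPowLat_eq_span_pow_smul_top, lambdaSeries_succ]
    exact le_sup_of_le_left (smul_mono_right _ ih)

variable {ρ} {c : ℕ} {M : ℕ → Submodule ℤ_[p] L}

theorem lambdaSeries_le_weightedSup (hM1 : M 1 = ⊤) (hMtop : M (c + 1) = ⊥)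
    (htriv : ∀ s : ℕ, 1 ≤ s → s ≤ c → ∀ m ∈ M s, ∀ g : G, ρ g m - m ∈ M (s + 1)) (i : ℕ) :
    lambdaSeries p L ρ i ≤ Submodule.weightedSup (Ideal.span {(p : ℤ_[p])}) M c i := by
  induction i with
  | zero => exact Submodule.top_le_weightedSup_zero _ M c hM1
  | succ i ih =>
    rw [lambdaSeries_succ]
    refine sup_le ((smul_mono_right _ ih).trans (Submodule.smul_weightedSup_le _ M c i)) ?_
    rw [Submodule.span_le]
    rintro _ ⟨m, hm, g, rfl⟩
    have hsection : ∀ s, 1 ≤ s → s ≤ c →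
        (M s).map ((ρ g).toLinearMap - LinearMap.id) ≤ M (s + 1) := fun s hs1 hs =>
      Submodule.map_le_iff_le_comap.2 fun m hm => htriv s hs1 hs m hm g
    exact Submodule.map_weightedSup_le _ M c _ hsection hMtop i (Submodule.mem_map_of_mem (ih hm))

theorem pow_smul_mem_pPowLat_of_mem_lambdaSeries (hM1 : M 1 = ⊤) (hMtop : M (c + 1) = ⊥)
    (htriv : ∀ s : ℕ, 1 ≤ s → s ≤ c → ∀ m ∈ M s, ∀ g : G, ρ g m - m ∈ M (s + 1)) {i : ℕ}
    {x : L} (hx : x ∈ lambdaSeries p L ρ i) : (p : ℤ_[p]) ^ c • x ∈ pPowLat p L i := by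
  rw [pPowLat_eq_span_pow_smul_top]
  exact Submodule.pow_smul_weightedSup_le _ M c i <| Submodule.smul_mem_smul
    (Ideal.pow_mem_pow (Ideal.mem_span_singleton_self _) c)
    (lambdaSeries_le_weightedSup p hM1 hMtop htriv i hx)

end LowerPSeries

theorem lambdaSeries_c_equivalent_pPow
    (G : Type) [Group G]
    (L : Type) [AddCommGroup L] [Module ℤ_[p] L]
    (ρ : G →* (L ≃ₗ[ℤ_[p]] L))
    (c : ℕ) (M : ℕ → Submodule ℤ_[p] L)
    (hM1 : M 1 = ⊤) (hMtop : M (c + 1) = ⊥)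
    (htriv : ∀ s : ℕ, 1 ≤ s → s ≤ c → ∀ m ∈ M s, ∀ g : G, ρ g m - m ∈ M (s + 1)) :
    ∀ i : ℕ, 1 ≤ i →
      (pPowLat p L i ≤ lambdaSeries p L ρ i) ∧
      (∀ x ∈ lambdaSeries p L ρ i, ∃ y : L,
        ((1 : ℚ_[p]) ⊗ₜ[ℤ_[p]] x : ℚ_[p] ⊗[ℤ_[p]] L) =
          ((p : ℚ_[p]) ^ ((i : ℤ) - (c : ℤ))) • ((1 : ℚ_[p]) ⊗ₜ[ℤ_[p]] y)) ∧
      (∀ x ∈ lambdaSeries p L ρ i, ((p : ℤ_[p]) ^ c) • x ∈ pPowLat p L i) ∧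
      (∀ x ∈ pPowLat p L i, ((p : ℤ_[p]) ^ c) • x ∈ lambdaSeries p L ρ i) := by
  intro i _
  have lower := pPowLat_le_lambdaSeries p ρ i
  have upper : ∀ x ∈ lambdaSeries p L ρ i, (p : ℤ_[p]) ^ c • x ∈ pPowLat p L i :=
    fun x hx => pow_smul_mem_pPowLat_of_mem_lambdaSeries p hM1 hMtop htriv hx
  refine ⟨lower, fun x hx => ?_, upper, fun x hx => lower (Submodule.smul_mem _ _ hx)⟩
  obtain ⟨y, hy⟩ := upper x hx
  rw [LinearMap.smul_apply, LinearMap.id_apply] at hy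
  have hp : algebraMap ℤ_[p] ℚ_[p] p ≠ 0 := by
    rw [map_natCast]
    exact_mod_cast (Fact.out : p.Prime).ne_zero
  refine ⟨y, ?_⟩
  simpa only [map_natCast] using
    TensorProduct.one_tmul_eq_zpow_smul_of_pow_smul_eq (K := ℚ_[p]) hp hy
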